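/- Let T be a directed tree, λ = {λ_v}_{v∈V°} a system of complex numbers, {ε_v}_{v∈V} a system of nonnegative reals, and {μ_v}_{v∈V} a system of Borel probability measures on [0,∞) satisfying, for every u ∈ V and Borel σ ⊆ [0,∞), μ_u(σ) = ∑_{v∈Chi(u)} |λ_v|² ∫_σ (1/s) dμ_v(s) + ε_u δ₀(σ). Let S_λ be the weighted shift on T with weights λ. Then S_λ is a bounded operator defined on all of ℓ²(V) if and only if there exists a real number M ≥ 0 such that the closed support of μ_u is contained in [0,M] for every u ∈ V. -/

import Mathlib

open MeasureTheory ENNReal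
open scoped NNReal
noncomputable section

/-- `μ` is a representing measure of the sequence `t`. -/
def IsRepMeasure (μ : Measure ℝ≥0) (t : ℕ → ℝ) : Prop :=
  ∀ n : ℕ, Integrable (fun s : ℝ≥0 => (s : ℝ) ^ n) μ ∧ t n = ∫ s, (s : ℝ) ^ n ∂μ

/-- `t` is a Stieltjes moment sequence. -/
def IsStieltjesMoment (t : ℕ → ℝ) : Prop := ∃ μ : Measure ℝ≥0, IsRepMeasure μ t

/-- `t` is a determinate Stieltjes moment sequence. -/
def IsDetStieltjesMoment (t : ℕ → ℝ) : Prop := ∃! μ : Measure ℝ≥0, IsRepMeasure μ t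

section Operators

universe u
variable {H : Type u} [NormedAddCommGroup H] [InnerProductSpace ℂ H]

/-- The maximal domain of the composition `S ∘ T`. -/
def compDomain (S T : H →ₗ.[ℂ] H) : Submodule ℂ H where
  carrier := {x | ∃ hx : x ∈ T.domain, T ⟨x, hx⟩ ∈ S.domain}
  zero_mem' := ⟨T.domain.zero_mem, by
    have h0 : (⟨0, T.domain.zero_mem⟩ : T.domain) = 0 := rfl
    rw [h0, LinearPMap.map_zero]; exact S.domain.zero_mem⟩
  add_mem' := by
    rintro x y ⟨hx, hx'⟩ ⟨hy, hy'⟩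
    refine ⟨T.domain.add_mem hx hy, ?_⟩
    have : (⟨x + y, T.domain.add_mem hx hy⟩ : T.domain) = ⟨x, hx⟩ + ⟨y, hy⟩ := rfl
    rw [this, LinearPMap.map_add]
    exact S.domain.add_mem hx' hy'
  smul_mem' := by
    rintro c x ⟨hx, hx'⟩
    refine ⟨T.domain.smul_mem c hx, ?_⟩
    have : (⟨c • x, T.domain.smul_mem c hx⟩ : T.domain) = c • (⟨x, hx⟩ : T.domain) := rfl
    rw [this, LinearPMap.map_smul]
    exact S.domain.smul_mem c hx'

/-- Composition `S ∘ T` of partial operators, on the maximal domain. -/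
def pmapComp (S T : H →ₗ.[ℂ] H) : H →ₗ.[ℂ] H :=
  S.comp (T.domRestrict (compDomain S T)) (by
    rintro ⟨x, hx⟩
    have hxT : x ∈ T.domain := (Submodule.mem_inf.mp hx).2
    have hxD : x ∈ compDomain S T := (Submodule.mem_inf.mp hx).1
    show T ⟨x, hxT⟩ ∈ S.domain
    exact hxD.choose_spec)

/-- Powers of a partial operator: `pmapPow S n = Sⁿ` with its natural domain. -/
def pmapPow (S : H →ₗ.[ℂ] H) : ℕ → (H →ₗ.[ℂ] H)
  | 0 => LinearMap.id.toPMap ⊤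
  | n + 1 => pmapComp (pmapPow S n) S

open Classical in
/-- Total (junk-valued) application of the power `Sⁿ`. -/
def powApp (S : H →ₗ.[ℂ] H) (n : ℕ) (x : H) : H :=
  if h : x ∈ (pmapPow S n).domain then (pmapPow S n) ⟨x, h⟩ else 0

/-- The set of `C^∞`-vectors of `S`. -/
def Dinf (S : H →ₗ.[ℂ] H) : Set H := {x | ∀ n : ℕ, x ∈ (pmapPow S n).domain}

/-- `F` is a core of `S`. -/
def IsCore (S : H →ₗ.[ℂ] H) (F : Submodule ℂ H) : Prop :=
  F ≤ S.domain ∧ (S.graph : Set (H × H)) ⊆ closure ((S.domRestrict F).graph : Set (H × H))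

end Operators
section Operators
universe u
variable {H : Type u} [NormedAddCommGroup H] [InnerProductSpace ℂ H]

/-- A normal (unbounded) operator: closed, densely defined, with `D(N*) = D(N)` and
`‖N* x‖ = ‖N x‖` on the common domain. -/
def IsNormalOp [CompleteSpace H] (N : H →ₗ.[ℂ] H) : Prop :=
  Dense (N.domain : Set H) ∧ N.IsClosed ∧ N.adjoint.domain = N.domain ∧
    ∀ (x : H) (hx : x ∈ N.domain) (hx' : x ∈ N.adjoint.domain),
      ‖N.adjoint ⟨x, hx'⟩‖ = ‖N ⟨x, hx⟩‖

/-- A subnormal operator: densely defined with a normal extension in a possibly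
larger Hilbert space. -/
def IsSubnormal {H : Type u} [NormedAddCommGroup H] [InnerProductSpace ℂ H]
    (S : H →ₗ.[ℂ] H) : Prop :=
  Dense (S.domain : Set H) ∧
  ∃ (K : Type u) (_ : NormedAddCommGroup K) (_ : InnerProductSpace ℂ K) (_ : CompleteSpace K)
    (J : H →ₗᵢ[ℂ] K) (N : K →ₗ.[ℂ] K), IsNormalOp N ∧
      ∀ x : S.domain, ∃ hx : J x ∈ N.domain, N ⟨J x, hx⟩ = J (S x)

/-- A hyponormal operator. -/
def IsHyponormal [CompleteSpace H] (S : H →ₗ.[ℂ] H) : Prop :=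
  Dense (S.domain : Set H) ∧
  ∀ (x : H) (hx : x ∈ S.domain), ∃ hx' : x ∈ S.adjoint.domain,
      ‖S.adjoint ⟨x, hx'⟩‖ ≤ ‖S ⟨x, hx⟩‖

end Operators

/-- A directed tree on the vertex set `V`: a connected directed graph without circuits
in which every non-root vertex has a unique parent. -/
structure DirectedTree (V : Type*) where
  edge : V → V → Prop
  connected : ∀ u v : V, Relation.ReflTransGen (fun a b => edge a b ∨ edge b a) u v
  no_circuits : ∀ v : V, ¬ Relation.TransGen edge v v
  parent_unique : ∀ u v w : V, edge v u → edge w u → v = w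

namespace DirectedTree

variable {V : Type*}

/-- The roots: vertices with no incoming edge. -/
def isRoot (T : DirectedTree V) (v : V) : Prop := ¬ ∃ u : V, T.edge u v

/-- `V°`: the non-root vertices, i.e. vertices having a parent. -/
def nonRoot (T : DirectedTree V) (v : V) : Prop := ∃ u : V, T.edge u v

open Classical in
/-- The parent function (with junk value at roots). -/
def par (T : DirectedTree V) (v : V) : V := if h : ∃ u : V, T.edge u v then h.choose else v

/-- The set of children of a vertex. -/
def chi (T : DirectedTree V) (u : V) : Set V := {v | T.edge u v}

/-- Iterated children `Chi^n(u)`. -/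
def chiN (T : DirectedTree V) : ℕ → V → Set V
  | 0, u => {u}
  | n + 1, u => ⋃ w ∈ T.chiN n u, T.chi w

/-- The descendants of `u`. -/
def des (T : DirectedTree V) (u : V) : Set V := ⋃ n : ℕ, T.chiN n u

/-- `T` is leafless: every vertex has a child. -/
def Leafless (T : DirectedTree V) : Prop := ∀ u : V, ∃ v : V, T.edge u v

/-- The product `λ_{u∣v} = ∏_{j=0}^{n-1} λ_{par^j(v)}` of the weights along the path of
length `n` ending at `v` (for `v ∈ Chi^n(u)` this is the usual `λ_{u∣v}`). -/
def pathProd (T : DirectedTree V) (lam : V → ℂ) (n : ℕ) (v : V) : ℂ :=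
  ∏ j ∈ Finset.range n, lam (T.par^[j] v)

open Classical in
/-- The formal weighted-shift transformation `Λ_T` on families of complex numbers. -/
def lamMap (T : DirectedTree V) (lam : V → ℂ) (f : V → ℂ) : V → ℂ :=
  fun v => if T.nonRoot v then lam v * f (T.par v) else 0

variable (T : DirectedTree V)

theorem lamMap_add (lam : V → ℂ) (f g : V → ℂ) :
    T.lamMap lam (f + g) = T.lamMap lam f + T.lamMap lam g := by
  funext v; simp only [lamMap, Pi.add_apply]; split <;> ring

theorem lamMap_smul (lam : V → ℂ) (c : ℂ) (f : V → ℂ) :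
    T.lamMap lam (c • f) = c • T.lamMap lam f := by
  funext v; simp only [lamMap, Pi.smul_apply, smul_eq_mul]; split <;> ring

theorem lamMap_zero (lam : V → ℂ) : T.lamMap lam (0 : V → ℂ) = 0 := by
  funext v; simp [lamMap]

/-- The domain of the weighted shift `S_λ`. -/
def shiftDomain (lam : V → ℂ) : Submodule ℂ (lp (fun _ : V => ℂ) 2) where
  carrier := {f | Memℓp (T.lamMap lam f) 2}
  zero_mem' := by
    rw [Set.mem_setOf_eq, lp.coeFn_zero, lamMap_zero]
    exact zero_memℓp
  add_mem' := by
    intro f g hf hg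
    rw [Set.mem_setOf_eq, lp.coeFn_add, lamMap_add]
    exact hf.add hg
  smul_mem' := by
    intro c f hf
    rw [Set.mem_setOf_eq, lp.coeFn_smul, lamMap_smul]
    exact hf.const_smul c

/-- The weighted shift `S_λ` on the directed tree `T`, as a partial operator in `ℓ²(V)`. -/
def shift (lam : V → ℂ) : lp (fun _ : V => ℂ) 2 →ₗ.[ℂ] lp (fun _ : V => ℂ) 2 where
  domain := T.shiftDomain lam
  toFun :=
    { toFun := fun f => (⟨T.lamMap lam f, f.2⟩ : lp (fun _ : V => ℂ) 2)
      map_add' := by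
        rintro f g
        apply lp.ext
        rw [lp.coeFn_add]
        show T.lamMap lam
            ((((f : lp (fun _ : V => ℂ) 2) : V → ℂ)) + (((g : lp (fun _ : V => ℂ) 2) : V → ℂ)))
          = T.lamMap lam ((f : lp (fun _ : V => ℂ) 2) : V → ℂ)
            + T.lamMap lam ((g : lp (fun _ : V => ℂ) 2) : V → ℂ)
        exact T.lamMap_add lam _ _
      map_smul' := by
        rintro c f
        apply lp.ext
        rw [lp.coeFn_smul]
        show T.lamMap lam (c • (((f : lp (fun _ : V => ℂ) 2) : V → ℂ)))
          = c • T.lamMap lam ((f : lp (fun _ : V => ℂ) 2) : V → ℂ)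
        exact T.lamMap_smul lam c _ }

end DirectedTree

open Classical in
/-- The basis vector `e_u` of `ℓ²(V)`. -/
def eVec {V : Type*} (u : V) : lp (fun _ : V => ℂ) 2 := lp.single 2 u 1

section MoreDefs
universe u
variable {H : Type u} [NormedAddCommGroup H] [InnerProductSpace ℂ H]

/-- The inner product, linear in the FIRST argument (the paper's convention). -/
def innerPaper (x y : H) : ℂ := inner ℂ y x

/-- The moment sequence `n ↦ ‖Sⁿ f‖²` generated by the vector `f`. -/
def momentSeq (S : H →ₗ.[ℂ] H) (f : H) : ℕ → ℝ := fun n => ‖powApp S n f‖ ^ 2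

/-- `f` is a quasi-analytic vector of `S` : `f ∈ D^∞(S)` and
`∑ₙ ‖Sⁿ f‖^{-1/n} = ∞` (with `1/0 = ∞`). -/
def IsQuasiAnalyticVec (S : H →ₗ.[ℂ] H) (f : H) : Prop :=
  (∀ n : ℕ, f ∈ (pmapPow S n).domain) ∧
  ∑' n : ℕ, ((‖powApp S (n + 1) f‖₊ ^ ((1 : ℝ) / (n + 1)) : ℝ≥0) : ℝ≥0∞)⁻¹ = ∞

end MoreDefs

/-- The consistency condition `μ_u(σ) = ∑_{v ∈ Chi(u)} |λ_v|² ∫_σ (1/s) dμ_v(s) + ε_u δ₀(σ)`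
at the vertex `u` (with the convention `1/0 = ∞`). -/
def consistentAt {V : Type*} (T : DirectedTree V) (lam : V → ℂ) (μ : V → MeasureTheory.Measure ℝ≥0)
    (ε : V → ℝ≥0) (u : V) : Prop :=
  ∀ σ : Set ℝ≥0, MeasurableSet σ →
    μ u σ = (∑' v : {v : V // T.edge u v},
        (‖lam (v : V)‖₊ : ℝ≥0∞) ^ 2 * ∫⁻ s in σ, ((s : ℝ≥0∞))⁻¹ ∂(μ (v : V)))
      + (ε u : ℝ≥0∞) * MeasureTheory.Measure.dirac (0 : ℝ≥0) σ

/-- The sequence `{ϑ, t₀, t₁, t₂, …}` obtained by prepending `ϑ` to `t`. -/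
def shiftedSeq (ϑ : ℝ) (t : ℕ → ℝ) : ℕ → ℝ := fun n => match n with
  | 0 => ϑ
  | n + 1 => t n

/-- A positive definite sequence of real numbers. -/
def IsPosDefSeq (t : ℕ → ℝ) : Prop :=
  ∀ (n : ℕ) (α : ℕ → ℂ),
    0 ≤ (∑ k ∈ Finset.range (n + 1), ∑ l ∈ Finset.range (n + 1),
        (t (k + l) : ℂ) * α k * (starRingEnd ℂ) (α l)).re ∧
    (∑ k ∈ Finset.range (n + 1), ∑ l ∈ Finset.range (n + 1),
        (t (k + l) : ℂ) * α k * (starRingEnd ℂ) (α l)).im = 0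

/-! `‖S_λ e_u‖² = ∑_{v ∈ Chi(u)} |λ_v|² =: c(u)`, and `‖S_λ f‖² = ∑_u c(u) |f(u)|²`, so `S_λ` is
bounded and everywhere defined iff `c` is bounded. Integrating `s^(n+1)` against the consistency
condition gives `∫ s^(n+1) dμ_u ≤ ∑_{v ∈ Chi(u)} |λ_v|² ∫ s^n dμ_v`, hence `∫ s^n dμ_u ≤ (sup c)^n`,
which confines every `μ_u` to `[0, sup c]`. Conversely, integrating `s` gives
`c(u) ≤ ∫ s dμ_u ≤ M`: the condition at `u` forbids an atom of `μ_v` at `0` when `λ_v ≠ 0`, since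
with `1/0 = ∞` it would make `μ_u {0}` infinite. -/

open Set

section L2

variable {α : Type*} {E : α → Type*} [∀ i, NormedAddCommGroup (E i)]

theorem memℓp_two_iff_tsum_lt_top {f : ∀ i, E i} :
    Memℓp f 2 ↔ ∑' i, (‖f i‖₊ : ℝ≥0∞) ^ 2 < ∞ := by
  have hsq : ∀ i, (‖f i‖₊ : ℝ≥0∞) ^ 2 = ((‖f i‖₊ ^ 2 : ℝ≥0) : ℝ≥0∞) := fun i => by push_cast; rfl
  rw [memℓp_gen_iff (by norm_num), tsum_congr hsq, lt_top_iff_ne_top,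
    ENNReal.tsum_coe_ne_top_iff_summable, ← NNReal.summable_coe]
  simp

theorem lp.coe_nnnorm_sq_eq_tsum (f : lp E 2) :
    (‖f‖₊ : ℝ≥0∞) ^ 2 = ∑' i, (‖f i‖₊ : ℝ≥0∞) ^ 2 := by
  have hsum : Summable fun i => ‖f i‖₊ ^ 2 := by
    simpa [← NNReal.summable_coe] using (memℓp_gen_iff (by norm_num)).1 f.2
  have h : ‖f‖₊ ^ 2 = ∑' i, ‖f i‖₊ ^ 2 := by
    apply NNReal.coe_injective
    simpa [NNReal.coe_tsum] using lp.norm_rpow_eq_tsum (p := 2) (by norm_num) f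
  rw [← ENNReal.coe_pow, h, ENNReal.coe_tsum hsum]
  push_cast
  rfl

end L2

theorem norm_eVec {V : Type*} (u : V) : ‖(eVec u : lp (fun _ : V => ℂ) 2)‖ = 1 := by
  simp [eVec, lp.norm_single]

namespace DirectedTree

variable {V : Type*} (T : DirectedTree V) (lam : V → ℂ)

theorem edge_par {v : V} (h : T.nonRoot v) : T.edge (T.par v) v := by
  rw [par, dif_pos (show ∃ u, T.edge u v from h)]
  exact h.choose_spec

theorem par_eq_of_edge {u v : V} (h : T.edge u v) : T.par v = u :=
  T.parent_unique v _ _ (T.edge_par ⟨u, h⟩) h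

def nonRootEquivSigmaChi : {v : V // T.nonRoot v} ≃ Σ u : V, {v : V // T.edge u v} where
  toFun v := ⟨T.par v, v, T.edge_par v.2⟩
  invFun p := ⟨p.2, p.1, p.2.2⟩
  left_inv _ := rfl
  right_inv := by
    rintro ⟨u, v, h⟩
    obtain rfl := T.par_eq_of_edge h
    rfl

def chiWeight (u : V) : ℝ≥0∞ :=
  ∑' v : {v : V // T.edge u v}, (‖lam v‖₊ : ℝ≥0∞) ^ 2

theorem tsum_nnnorm_lamMap_sq (f : V → ℂ) :
    ∑' v, (‖T.lamMap lam f v‖₊ : ℝ≥0∞) ^ 2 = ∑' u, T.chiWeight lam u * (‖f u‖₊ : ℝ≥0∞) ^ 2 := by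
  have hsupp : Function.support (fun v => (‖T.lamMap lam f v‖₊ : ℝ≥0∞) ^ 2) ⊆ {v | T.nonRoot v} :=
    fun v hv => by_contra fun hv' : ¬ T.nonRoot v => hv (by simp [lamMap, hv'])
  have hterm : ∀ v : {v : V // T.nonRoot v}, (‖T.lamMap lam f v‖₊ : ℝ≥0∞) ^ 2
      = (‖lam v‖₊ : ℝ≥0∞) ^ 2 * (‖f (T.par v)‖₊ : ℝ≥0∞) ^ 2 := fun v => by
    simp [lamMap, v.2, mul_pow]
  rw [← tsum_subtype_eq_of_support_subset hsupp]
  change ∑' v : {v // T.nonRoot v}, _ = _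
  rw [tsum_congr hterm]
  refine (T.nonRootEquivSigmaChi.tsum_eq
    fun p => (‖lam p.2‖₊ : ℝ≥0∞) ^ 2 * (‖f p.1‖₊ : ℝ≥0∞) ^ 2).trans ?_
  rw [ENNReal.tsum_sigma']
  exact tsum_congr fun u => ENNReal.tsum_mul_right (a := (‖f u‖₊ : ℝ≥0∞) ^ 2)

theorem tsum_nnnorm_lamMap_eVec_sq (u : V) :
    ∑' v, (‖T.lamMap lam (eVec u) v‖₊ : ℝ≥0∞) ^ 2 = T.chiWeight lam u := by
  rw [tsum_nnnorm_lamMap_sq, tsum_eq_single u fun w hw => by simp [eVec, hw]]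
  simp [eVec]

theorem coe_nnnorm_shift_sq (x : (T.shift lam).domain) :
    (‖T.shift lam x‖₊ : ℝ≥0∞) ^ 2
      = ∑' u, T.chiWeight lam u * (‖(x : lp (fun _ : V => ℂ) 2) u‖₊ : ℝ≥0∞) ^ 2 :=
  (lp.coe_nnnorm_sq_eq_tsum _).trans (T.tsum_nnnorm_lamMap_sq lam _)

theorem chiWeight_eq_nnnorm_shift_eVec_sq {u : V} (hu : eVec u ∈ (T.shift lam).domain) :
    T.chiWeight lam u = (‖T.shift lam ⟨eVec u, hu⟩‖₊ : ℝ≥0∞) ^ 2 :=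
  (T.tsum_nnnorm_lamMap_eVec_sq lam u).symm.trans
    (lp.coe_nnnorm_sq_eq_tsum (T.shift lam ⟨eVec u, hu⟩)).symm

theorem shift_domain_eq_top_of_chiWeight_le {B : ℝ≥0} (hB : ∀ u, T.chiWeight lam u ≤ B) :
    (T.shift lam).domain = ⊤ := by
  refine Submodule.eq_top_iff'.2 fun f => memℓp_two_iff_tsum_lt_top.2 ?_
  calc ∑' v, (‖T.lamMap lam f v‖₊ : ℝ≥0∞) ^ 2
      = ∑' u, T.chiWeight lam u * (‖f u‖₊ : ℝ≥0∞) ^ 2 := T.tsum_nnnorm_lamMap_sq lam f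
    _ ≤ ∑' u, (B : ℝ≥0∞) * (‖f u‖₊ : ℝ≥0∞) ^ 2 :=
        ENNReal.tsum_le_tsum fun u => by gcongr; exact hB u
    _ < ∞ := by
      rw [ENNReal.tsum_mul_left]
      exact ENNReal.mul_lt_top ENNReal.coe_lt_top (memℓp_two_iff_tsum_lt_top.1 f.2)

theorem norm_shift_le_of_chiWeight_le {B : ℝ≥0} (hB : ∀ u, T.chiWeight lam u ≤ B)
    (x : (T.shift lam).domain) :
    ‖T.shift lam x‖ ≤ NNReal.sqrt B * ‖(x : lp (fun _ : V => ℂ) 2)‖ := by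
  have hsq : (‖T.shift lam x‖₊ : ℝ≥0∞) ^ 2 ≤ B * (‖(x : lp (fun _ : V => ℂ) 2)‖₊ : ℝ≥0∞) ^ 2 := by
    rw [coe_nnnorm_shift_sq, lp.coe_nnnorm_sq_eq_tsum, ← ENNReal.tsum_mul_left]
    exact ENNReal.tsum_le_tsum fun u => by gcongr; exact hB u
  have hsq' : ‖T.shift lam x‖₊ ^ 2 ≤ B * ‖(x : lp (fun _ : V => ℂ) 2)‖₊ ^ 2 := mod_cast hsq
  have := NNReal.sqrt_le_sqrt.2 hsq'
  rw [NNReal.sqrt_mul, NNReal.sqrt_sq, NNReal.sqrt_sq] at this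
  exact NNReal.coe_le_coe.2 this

theorem chiWeight_le_of_norm_shift_le (hdom : (T.shift lam).domain = ⊤) {C : ℝ}
    (hC : ∀ x : (T.shift lam).domain, ‖T.shift lam x‖ ≤ C * ‖(x : lp (fun _ : V => ℂ) 2)‖)
    (u : V) : T.chiWeight lam u ≤ (C.toNNReal ^ 2 : ℝ≥0) := by
  have hu : eVec u ∈ (T.shift lam).domain := hdom ▸ Submodule.mem_top
  have hnorm : ‖T.shift lam ⟨eVec u, hu⟩‖₊ ≤ C.toNNReal := by
    rw [← norm_toNNReal]
    simpa [norm_eVec] using Real.toNNReal_mono (hC ⟨eVec u, hu⟩)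
  rw [T.chiWeight_eq_nnnorm_shift_eVec_sq lam hu]
  exact_mod_cast pow_le_pow_left' hnorm 2

theorem shift_bounded_iff_exists_chiWeight_le :
    ((T.shift lam).domain = ⊤ ∧ ∃ C : ℝ, ∀ x : (T.shift lam).domain,
        ‖T.shift lam x‖ ≤ C * ‖(x : lp (fun _ : V => ℂ) 2)‖)
      ↔ ∃ B : ℝ≥0, ∀ u, T.chiWeight lam u ≤ B :=
  ⟨fun ⟨hdom, _, hC⟩ => ⟨_, T.chiWeight_le_of_norm_shift_le lam hdom hC⟩,
    fun ⟨_, hB⟩ => ⟨T.shift_domain_eq_top_of_chiWeight_le lam hB, _,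
      T.norm_shift_le_of_chiWeight_le lam hB⟩⟩

end DirectedTree

theorem measure_Ioi_eq_zero_of_lintegral_pow_le {μ : Measure ℝ≥0} {M : ℝ≥0}
    (hμ : ∀ n : ℕ, ∫⁻ s, (s : ℝ≥0∞) ^ n ∂μ ≤ (M : ℝ≥0∞) ^ n) : μ (Ioi M) = 0 := by
  have hIci : ∀ a : ℝ≥0, M < a → μ (Ici a) = 0 := by
    intro a ha
    have ha0 : (a : ℝ≥0∞) ≠ 0 := by exact_mod_cast (zero_le.trans_lt ha).ne'
    have hratio : (M : ℝ≥0∞) / a < 1 :=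
      (ENNReal.div_lt_iff (.inl ha0) (.inl ENNReal.coe_ne_top)).2 (by simpa using ha)
    have hmarkov : ∀ n : ℕ, μ (Ici a) ≤ ((M : ℝ≥0∞) / a) ^ n := fun n => by
      rw [div_eq_mul_inv, mul_pow, ← ENNReal.inv_pow, ← div_eq_mul_inv,
        ENNReal.le_div_iff_mul_le (.inl (pow_ne_zero n ha0))
          (.inl (ENNReal.pow_ne_top ENNReal.coe_ne_top)), mul_comm]
      calc (a : ℝ≥0∞) ^ n * μ (Ici a)
          ≤ (a : ℝ≥0∞) ^ n * μ {s | (a : ℝ≥0∞) ^ n ≤ (s : ℝ≥0∞) ^ n} := by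
            gcongr
            exact fun s (hs : a ≤ s) => pow_le_pow_left' (ENNReal.coe_le_coe.2 hs) n
        _ ≤ ∫⁻ s, (s : ℝ≥0∞) ^ n ∂μ :=
            mul_meas_ge_le_lintegral₀ (measurable_coe_nnreal_ennreal.pow_const n).aemeasurable _
        _ ≤ (M : ℝ≥0∞) ^ n := hμ n
    exact le_zero_iff.1 <|
      ge_of_tendsto' (ENNReal.tendsto_pow_atTop_nhds_zero_of_lt_one hratio) hmarkov
  obtain ⟨a, -, haM, hlim⟩ := exists_seq_strictAnti_tendsto M
  rw [← iUnion_Ici_eq_Ioi_of_lt_of_tendsto haM hlim]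
  exact measure_iUnion_null fun n => hIci _ (haM n)

theorem lintegral_coe_le_of_measure_Ioi_eq_zero {μ : Measure ℝ≥0} [IsProbabilityMeasure μ]
    {M : ℝ≥0} (hμ : μ (Ioi M) = 0) : ∫⁻ s, (s : ℝ≥0∞) ∂μ ≤ M := by
  calc ∫⁻ s, (s : ℝ≥0∞) ∂μ ≤ ∫⁻ _, (M : ℝ≥0∞) ∂μ :=
        lintegral_mono_ae <| (measure_eq_zero_iff_ae_notMem.1 hμ).mono fun s hs => by
          simpa using hs
    _ = M := by simp

namespace consistentAt

variable {V : Type*} {T : DirectedTree V} {lam : V → ℂ} {μ : V → Measure ℝ≥0} {ε : V → ℝ≥0}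
  {u : V}

theorem eq_sum_withDensity_add_dirac (h : consistentAt T lam μ ε u) :
    μ u = Measure.sum (fun v : {v : V // T.edge u v} =>
        (‖lam v‖₊ : ℝ≥0∞) ^ 2 • (μ v).withDensity fun s => (s : ℝ≥0∞)⁻¹)
      + (ε u : ℝ≥0∞) • Measure.dirac 0 := by
  ext σ hσ
  rw [h σ hσ]
  simp only [Measure.add_apply, Measure.sum_apply _ hσ, Measure.smul_apply, smul_eq_mul,
    withDensity_apply _ hσ]

theorem lintegral_eq (h : consistentAt T lam μ ε u) {g : ℝ≥0 → ℝ≥0∞} (hg : Measurable g) :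
    ∫⁻ s, g s ∂μ u = ∑' v : {v : V // T.edge u v},
        (‖lam v‖₊ : ℝ≥0∞) ^ 2 * ∫⁻ s, (s : ℝ≥0∞)⁻¹ * g s ∂μ v + ε u * g 0 := by
  rw [h.eq_sum_withDensity_add_dirac, lintegral_add_measure, lintegral_sum_measure,
    lintegral_smul_measure, lintegral_dirac]
  congr 1
  refine tsum_congr fun v => ?_
  rw [lintegral_smul_measure, smul_eq_mul, lintegral_withDensity_eq_lintegral_mul _
    (f := fun s : ℝ≥0 => (s : ℝ≥0∞)⁻¹) measurable_coe_nnreal_ennreal.inv hg]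
  rfl

theorem measure_singleton_zero_eq_zero [IsFiniteMeasure (μ u)] (h : consistentAt T lam μ ε u)
    {v : V} (huv : T.edge u v) (hv : lam v ≠ 0) : μ v {0} = 0 := by
  by_contra h0
  have hinf : (‖lam v‖₊ : ℝ≥0∞) ^ 2 * ∫⁻ s in {0}, (s : ℝ≥0∞)⁻¹ ∂μ v = ∞ := by
    rw [lintegral_singleton]
    simp [hv, h0]
  refine measure_ne_top (μ u) {0} (top_le_iff.1 ?_)
  rw [h {0} (measurableSet_singleton 0), ← hinf]
  exact le_add_right (ENNReal.le_tsum (⟨v, huv⟩ : {v : V // T.edge u v}))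

theorem lintegral_pow_succ_le (h : consistentAt T lam μ ε u) (n : ℕ) :
    ∫⁻ s, (s : ℝ≥0∞) ^ (n + 1) ∂μ u
      ≤ ∑' v : {v : V // T.edge u v}, (‖lam v‖₊ : ℝ≥0∞) ^ 2 * ∫⁻ s, (s : ℝ≥0∞) ^ n ∂μ v := by
  rw [h.lintegral_eq (measurable_coe_nnreal_ennreal.pow_const _)]
  simp only [ENNReal.coe_zero, zero_pow n.succ_ne_zero, mul_zero, add_zero]
  gcongr with v s
  rcases eq_or_ne s 0 with rfl | hs
  · simp
  · rw [pow_succ', ← mul_assoc, ENNReal.inv_mul_cancel (by simpa using hs) ENNReal.coe_ne_top,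
      one_mul]

theorem chiWeight_le_lintegral [∀ v, IsProbabilityMeasure (μ v)] (h : consistentAt T lam μ ε u) :
    T.chiWeight lam u ≤ ∫⁻ s, (s : ℝ≥0∞) ∂μ u := by
  rw [h.lintegral_eq measurable_coe_nnreal_ennreal]
  refine le_add_right (ENNReal.tsum_le_tsum fun v => ?_)
  rcases eq_or_ne (lam v) 0 with hv | hv
  · simp [hv]
  · have hae : ∀ᵐ s : ℝ≥0 ∂μ v, (s : ℝ≥0∞)⁻¹ * s = 1 := by
      filter_upwards [measure_eq_zero_iff_ae_notMem.1 (h.measure_singleton_zero_eq_zero v.2 hv)]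
        with s hs
      exact ENNReal.inv_mul_cancel (by simpa using hs) ENNReal.coe_ne_top
    simp [lintegral_congr_ae hae]

end consistentAt

section Boundedness

variable {V : Type*} {T : DirectedTree V} {lam : V → ℂ} {μ : V → Measure ℝ≥0} {ε : V → ℝ≥0}

theorem lintegral_pow_le_of_chiWeight_le [∀ v, IsProbabilityMeasure (μ v)]
    (hcons : ∀ u, consistentAt T lam μ ε u) {B : ℝ≥0∞} (hB : ∀ u, T.chiWeight lam u ≤ B)
    (n : ℕ) (u : V) : ∫⁻ s, (s : ℝ≥0∞) ^ n ∂μ u ≤ B ^ n := by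
  induction n generalizing u with
  | zero => simp
  | succ n ih =>
    calc ∫⁻ s, (s : ℝ≥0∞) ^ (n + 1) ∂μ u
        ≤ ∑' v : {v : V // T.edge u v}, (‖lam v‖₊ : ℝ≥0∞) ^ 2 * ∫⁻ s, (s : ℝ≥0∞) ^ n ∂μ v :=
          (hcons u).lintegral_pow_succ_le n
      _ ≤ ∑' v : {v : V // T.edge u v}, (‖lam v‖₊ : ℝ≥0∞) ^ 2 * B ^ n := by
          gcongr with v; exact ih v
      _ = T.chiWeight lam u * B ^ n := ENNReal.tsum_mul_right
      _ ≤ B ^ (n + 1) := by rw [pow_succ']; gcongr; exact hB u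

theorem exists_chiWeight_le_iff_exists_measure_Ioi_eq_zero [∀ v, IsProbabilityMeasure (μ v)]
    (hcons : ∀ u, consistentAt T lam μ ε u) :
    (∃ B : ℝ≥0, ∀ u, T.chiWeight lam u ≤ B) ↔ ∃ M : ℝ≥0, ∀ u, μ u (Ioi M) = 0 := by
  constructor
  · rintro ⟨B, hB⟩
    exact ⟨B, fun u => measure_Ioi_eq_zero_of_lintegral_pow_le
      (lintegral_pow_le_of_chiWeight_le hcons hB · u)⟩
  · rintro ⟨M, hM⟩
    exact ⟨M, fun u => (hcons u).chiWeight_le_lintegral.trans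
      (lintegral_coe_le_of_measure_Ioi_eq_zero (hM u))⟩

end Boundedness

/-- a weighted shift admitting a consistent system of probability measures
is bounded and everywhere defined iff the measures have uniformly bounded supports. -/
theorem stmt14 {V : Type*} (T : DirectedTree V) (lam : V → ℂ)
    (ε : V → ℝ≥0) (μ : V → Measure ℝ≥0)
    (hprob : ∀ v : V, IsProbabilityMeasure (μ v))
    (hcons : ∀ u : V, consistentAt T lam μ ε u) :
    ((T.shift lam).domain = ⊤ ∧ ∃ C : ℝ, ∀ x : (T.shift lam).domain,
        ‖T.shift lam x‖ ≤ C * ‖(x : lp (fun _ : V => ℂ) 2)‖)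
    ↔ ∃ M : ℝ≥0, ∀ u : V, μ u {s : ℝ≥0 | M < s} = 0 :=
  (T.shift_bounded_iff_exists_chiWeight_le lam).trans
    (exists_chiWeight_le_iff_exists_measure_Ioi_eq_zero hcons)
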